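/- arXiv:0804.2727 — 2 statements merged into one kernel-verified Lean document; each statement's English description precedes it below -/
import Mathlib

section
/- Fix an integer m ≥ 1 and an index i with −m ≤ i ≤ m. The error functional E, viewed as a function of the single coefficient γ_i (with the other coefficients held fixed), is differentiable, and its partial derivative with respect to γ_i equals 4 ∫_0^{π/2} ( −ζ sin(iζ) + Σ_{k=-m}^{m} γ_k cos((k−i)ζ) ) dζ. -/
open Real Finset

/-- The DRP integrated dispersion error functional. -/
noncomputable def drpError (m : ℕ) (γ : ℤ → ℝ) : ℝ :=
  2 * ∫ ζ in (0 : ℝ)..(π / 2),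
    ((ζ - ∑ k ∈ Finset.Icc (-(m : ℤ)) (m : ℤ), γ k * Real.sin ((k : ℝ) * ζ)) ^ 2 +
     (∑ k ∈ Finset.Icc (-(m : ℤ)) (m : ℤ), γ k * Real.cos ((k : ℝ) * ζ)) ^ 2)

/-!
Only the `i`-th terms of the two trigonometric sums depend on `γ_i`, and they move by
`(t - γ_i) sin(iζ)` and `(t - γ_i) cos(iζ)`. Since `sin² + cos² = 1`, the integrand is therefore an
exact quadratic polynomial in `t - γ_i` with leading coefficient `1`, and the angle subtraction
formula `cos((k - i)ζ) = cos(kζ) cos(iζ) + sin(kζ) sin(iζ)` identifies its linear coefficient.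
Hence `E` is a quadratic polynomial in `γ_i`, whose derivative is read off directly.
-/

open Function

noncomputable def drpIntegrand (s : Finset ℤ) (γ : ℤ → ℝ) (ζ : ℝ) : ℝ :=
  (ζ - ∑ k ∈ s, γ k * sin ((k : ℝ) * ζ)) ^ 2 + (∑ k ∈ s, γ k * cos ((k : ℝ) * ζ)) ^ 2

noncomputable def drpGradIntegrand (s : Finset ℤ) (γ : ℤ → ℝ) (i : ℤ) (ζ : ℝ) : ℝ :=
  -ζ * sin ((i : ℝ) * ζ) + ∑ k ∈ s, γ k * cos (((k : ℝ) - (i : ℝ)) * ζ)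

theorem drpError_eq (m : ℕ) (γ : ℤ → ℝ) :
    drpError m γ = 2 * ∫ ζ in (0 : ℝ)..(π / 2), drpIntegrand (Icc (-(m : ℤ)) m) γ ζ :=
  rfl

theorem Finset.sum_update_mul {ι R : Type*} [CommRing R] [DecidableEq ι] {s : Finset ι}
    {i : ι} (hi : i ∈ s) (γ φ : ι → R) (t : R) :
    ∑ k ∈ s, update γ i t k * φ k = ∑ k ∈ s, γ k * φ k + (t - γ i) * φ i := by
  have hγ : update γ i t = γ + Pi.single i (t - γ i) := by
    ext k
    rcases eq_or_ne k i with rfl | hk <;> simp [*]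
  simp only [hγ, Pi.add_apply, add_mul, sum_add_distrib, Pi.single_apply, ite_mul, zero_mul,
    sum_ite_eq', if_pos hi]

theorem sum_mul_cos_sub_mul (s : Finset ℤ) (γ : ℤ → ℝ) (i : ℤ) (ζ : ℝ) :
    ∑ k ∈ s, γ k * cos (((k : ℝ) - (i : ℝ)) * ζ) =
      (∑ k ∈ s, γ k * cos ((k : ℝ) * ζ)) * cos ((i : ℝ) * ζ) +
        (∑ k ∈ s, γ k * sin ((k : ℝ) * ζ)) * sin ((i : ℝ) * ζ) := by
  simp only [sum_mul, ← sum_add_distrib, sub_mul, cos_sub]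
  exact sum_congr rfl fun k _ => by ring

theorem drpIntegrand_update {s : Finset ℤ} {i : ℤ} (hi : i ∈ s) (γ : ℤ → ℝ) (t ζ : ℝ) :
    drpIntegrand s (update γ i t) ζ =
      drpIntegrand s γ ζ + 2 * (t - γ i) * drpGradIntegrand s γ i ζ + (t - γ i) ^ 2 := by
  simp only [drpIntegrand, drpGradIntegrand, sum_update_mul hi, sum_mul_cos_sub_mul]
  linear_combination (t - γ i) ^ 2 * sin_sq_add_cos_sq ((i : ℝ) * ζ)

theorem continuous_drpIntegrand (s : Finset ℤ) (γ : ℤ → ℝ) : Continuous (drpIntegrand s γ) := by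
  unfold drpIntegrand; fun_prop

theorem continuous_drpGradIntegrand (s : Finset ℤ) (γ : ℤ → ℝ) (i : ℤ) :
    Continuous (drpGradIntegrand s γ i) := by
  unfold drpGradIntegrand; fun_prop

theorem integral_drpIntegrand_update {s : Finset ℤ} {i : ℤ} (hi : i ∈ s) (γ : ℤ → ℝ)
    (t a b : ℝ) :
    ∫ ζ in a..b, drpIntegrand s (update γ i t) ζ =
      (∫ ζ in a..b, drpIntegrand s γ ζ) +
        2 * (t - γ i) * (∫ ζ in a..b, drpGradIntegrand s γ i ζ) + (b - a) * (t - γ i) ^ 2 := by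
  have hF := (continuous_drpIntegrand s γ).intervalIntegrable (μ := MeasureTheory.volume) a b
  have hG := ((continuous_drpGradIntegrand s γ i).const_mul (2 * (t - γ i))).intervalIntegrable
    (μ := MeasureTheory.volume) a b
  simp only [drpIntegrand_update hi]
  rw [intervalIntegral.integral_add (hF.add hG) intervalIntegrable_const,
    intervalIntegral.integral_add hF hG, intervalIntegral.integral_const_mul,
    intervalIntegral.integral_const, smul_eq_mul]

theorem hasDerivAt_add_mul_sub_add_mul_sub_sq (c b a x₀ : ℝ) :
    HasDerivAt (fun t => c + b * (t - x₀) + a * (t - x₀) ^ 2) b x₀ := by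
  have hlin : HasDerivAt (fun t : ℝ => t - x₀) 1 x₀ := (hasDerivAt_id x₀).sub_const x₀
  have h : HasDerivAt (fun t => c + b * (t - x₀) + a * (t - x₀) ^ 2)
      (0 + b * 1 + a * (2 * (x₀ - x₀) ^ 1 * 1)) x₀ :=
    ((hasDerivAt_const x₀ c).add (hlin.const_mul b)).add ((hlin.pow 2).const_mul a)
  simpa using h

theorem stmt_2_general (m : ℕ) (γ : ℤ → ℝ) (i : ℤ)
    (hi : i ∈ Finset.Icc (-(m : ℤ)) (m : ℤ)) :
    HasDerivAt (fun t : ℝ => drpError m (Function.update γ i t))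
      (4 * ∫ ζ in (0 : ℝ)..(π / 2),
        (-ζ * Real.sin ((i : ℝ) * ζ) +
          ∑ k ∈ Finset.Icc (-(m : ℤ)) (m : ℤ), γ k * Real.cos (((k : ℝ) - (i : ℝ)) * ζ)))
      (γ i) := by
  have hquad : (fun t : ℝ => drpError m (update γ i t)) = fun t =>
      drpError m γ + 4 * (∫ ζ in (0 : ℝ)..(π / 2), drpGradIntegrand (Icc (-(m : ℤ)) m) γ i ζ) *
        (t - γ i) + π * (t - γ i) ^ 2 := by
    funext t
    rw [drpError_eq, drpError_eq, integral_drpIntegrand_update hi]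
    ring
  rw [hquad]
  exact hasDerivAt_add_mul_sub_add_mul_sub_sq _ _ _ _

theorem stmt_2 (m : ℕ) (hm : 1 ≤ m) (γ : ℤ → ℝ) (i : ℤ)
    (hi : i ∈ Finset.Icc (-(m : ℤ)) (m : ℤ)) :
    HasDerivAt (fun t : ℝ => drpError m (Function.update γ i t))
      (4 * ∫ ζ in (0 : ℝ)..(π / 2),
        (-ζ * Real.sin ((i : ℝ) * ζ) +
          ∑ k ∈ Finset.Icc (-(m : ℤ)) (m : ℤ), γ k * Real.cos (((k : ℝ) - (i : ℝ)) * ζ)))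
      (γ i) :=
  stmt_2_general m γ i hi
end

section
/- Let A, v, σ, C, U₁, V₁, V₀, C₁ be real numbers with v ≠ 0, σ ≠ 0 and C₁ ≠ 0, and define u(ξ) = U₁ tanh(C₁ξ) + V₁ / cosh(C₁ξ) + V₀. If u satisfies (A − v)·u(ξ) − (v² σ / 2)·u'(ξ) = C for every real ξ, then V₁ = 0; that is, the bell-profile (sech) component of the travelling-wave ansatz must vanish. -/
/-!
After the substitution `t = C₁ ξ` the equation becomes an identity in `tanh t`, `sech t` and
`sinh t`. Subtracting its value at `-t` isolates the odd part, which after division by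
`2 sinh t / cosh² t` reads `(A - v) U₁ cosh t + (v² σ / 2) C₁ V₁ = 0` for every `t ≠ 0`.
As `cosh` is not constant, both coefficients vanish, and `v, σ, C₁ ≠ 0` force `V₁ = 0`.
-/

open Real

theorem hasDerivAt_kink_bell (U V W c x : ℝ) :
    HasDerivAt (fun ξ => U * tanh (c * ξ) + V / cosh (c * ξ) + W)
      (c * (U - V * sinh (c * x)) / cosh (c * x) ^ 2) x := by
  have hform : (fun ξ => U * tanh (c * ξ) + V / cosh (c * ξ) + W) =
      fun ξ => (U * sinh (c * ξ) + V) / cosh (c * ξ) + W := by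
    funext ξ
    rw [tanh_eq_sinh_div_cosh]
    field_simp
  have hlin : HasDerivAt (fun ξ => c * ξ) c x := by
    simpa using (hasDerivAt_id x).const_mul c
  have hsinh : HasDerivAt (fun ξ => sinh (c * ξ)) (cosh (c * x) * c) x :=
    (hasDerivAt_sinh _).comp x hlin
  have hcosh : HasDerivAt (fun ξ => cosh (c * ξ)) (sinh (c * x) * c) x :=
    (hasDerivAt_cosh _).comp x hlin
  rw [hform]
  refine (((hsinh.const_mul U).add_const V).div hcosh (cosh_pos _).ne').add_const W
    |>.congr_deriv ?_
  field_simp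
  linear_combination c * U * cosh_sq_sub_sinh_sq (c * x)

theorem mul_cosh_add_eq_zero_of_kink_bell_eq {a k U V W C : ℝ}
    (h : ∀ t, a * (U * tanh t + V / cosh t + W) - k * (U - V * sinh t) / cosh t ^ 2 = C)
    {t : ℝ} (ht : t ≠ 0) : a * U * cosh t + k * V = 0 := by
  have hsinh : sinh t ≠ 0 := sinh_ne_zero.mpr ht
  have hpos := h t
  have hneg := h (-t)
  rw [tanh_neg, sinh_neg, cosh_neg] at hneg
  rw [tanh_eq_sinh_div_cosh] at hpos hneg
  field_simp at hpos hneg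
  have hodd : (a * U * cosh t + k * V) * (2 * sinh t) = 0 := by
    linear_combination hpos - hneg
  simpa [hsinh] using hodd

theorem eq_zero_of_forall_mul_cosh_add_eq_zero {p q : ℝ} (h : ∀ t ≠ 0, p * cosh t + q = 0) :
    p = 0 ∧ q = 0 := by
  have hlt : cosh 1 < cosh 2 := by
    rw [cosh_lt_cosh, abs_of_pos one_pos, abs_of_pos two_pos]
    norm_num
  have hdiff : p * (cosh 2 - cosh 1) = 0 := by
    linear_combination h 2 two_ne_zero - h 1 one_ne_zero
  have hp : p = 0 := by simpa [sub_ne_zero.mpr hlt.ne'] using hdiff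
  exact ⟨hp, by simpa [hp] using h 1 one_ne_zero⟩

theorem stmt_15 (A v σ C U₁ V₁ V₀ C₁ : ℝ)
    (hv : v ≠ 0) (hσ : σ ≠ 0) (hC₁ : C₁ ≠ 0)
    (u : ℝ → ℝ)
    (hu : ∀ ξ : ℝ, u ξ = U₁ * Real.tanh (C₁ * ξ) + V₁ / Real.cosh (C₁ * ξ) + V₀)
    (hode : ∀ ξ : ℝ, (A - v) * u ξ - v ^ 2 * σ / 2 * deriv u ξ = C) :
    V₁ = 0 := by
  obtain rfl : u = fun ξ => U₁ * tanh (C₁ * ξ) + V₁ / cosh (C₁ * ξ) + V₀ := funext hu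
  have hk : v ^ 2 * σ / 2 * C₁ ≠ 0 := by positivity
  have hprofile : ∀ t, (A - v) * (U₁ * tanh t + V₁ / cosh t + V₀)
      - v ^ 2 * σ / 2 * C₁ * (U₁ - V₁ * sinh t) / cosh t ^ 2 = C := by
    intro t
    have := hode (t / C₁)
    beta_reduce at this
    rwa [(hasDerivAt_kink_bell U₁ V₁ V₀ C₁ _).deriv, mul_div_cancel₀ _ hC₁, ← mul_div_assoc,
      ← mul_assoc] at this
  have hcoeffs := eq_zero_of_forall_mul_cosh_add_eq_zero fun _ ht =>
    mul_cosh_add_eq_zero_of_kink_bell_eq hprofile ht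
  simpa [hk] using hcoeffs.2
end
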